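/- arXiv:2508.06487 — 3 statements merged into one kernel-verified Lean document; each statement's English description precedes it below -/
import Mathlib

section
/- Let d ≥ 1 and M > 0. There exists a constant C > 0 depending only on d and M such that the following holds. Let u : ℝ × ℝ^d → ℝ be three times continuously differentiable with all partial derivatives (jointly in time and space) of order ≤ 3 bounded in absolute value by M. Let A ∈ ℝ^{d×d} be symmetric and β ∈ ℝ^d, with all entries of A and β bounded in absolute value by M; let μ ∈ (0, M], and γ̄, c̄, ḡ, ψ̄, κ ∈ [−M, M]. Let z ∈ ℝ^d, let n ∈ ℝ^d be a unit vector, and let s ∈ ℝ. Assume: (PDE) ∂_t u(s,z) + 𝒜_{A,β}u(s,·)(z) + c̄ u(s,z) + ḡ = 0, and (sticky boundary relation) −μ 𝒜_{A,β}u(s,·)(z) + ∇_x u(s,z)·n + γ̄ u(s,z) = ψ̄. Let h ∈ (0,1), r ∈ (0, √h], Y_k > 0, and Z′ ∈ ℝ, and define Y′ = (1 + hκ)Y_k, Y₊ = Y′ + (2rγ̄ + 2rμc̄ + 2r²γ̄² + 4r²μγ̄c̄ + 2r²μ²c̄²)Y_k, and Z₊ = Z′ + (−2rψ̄ − 2r²γ̄ψ̄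 − 2r²μc̄ψ̄ + 2rμḡ + 2r²μγ̄ḡ + 2r²μ²c̄ḡ)Y_k. Then |u(s + μr, z + rn)·Y₊ + Z₊ − u(s − μr, z − rn)·Y′ − Z′| ≤ C h r Y_k. -/
lemma taylor_sym_aux {E : Type*} [NormedAddCommGroup E] [NormedSpace ℝ E]
    (u : E → ℝ) (hu : ContDiff ℝ 3 u) (M B : ℝ) (hM : 0 ≤ M) (hB : 0 ≤ B)
    (hb2 : ∀ x, ‖iteratedFDeriv ℝ 2 u x‖ ≤ M)
    (hb3 : ∀ x, ‖iteratedFDeriv ℝ 3 u x‖ ≤ M)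
    (p W : E) (hW : ‖W‖ ≤ B) (r : ℝ) (hr : 0 < r) :
    |u (p + r • W) - u (p + (-r) • W) - 2*r*(fderiv ℝ u p W)| ≤ 2*(M*B^3)*r^3 ∧
    |u (p + r • W) - u p - r*(fderiv ℝ u p W)| ≤ (M*B^2)*r^2 := by
  have hu1 : ContDiff ℝ 2 (fderiv ℝ u) := hu.fderiv_right (by norm_num)
  have hu2 : ContDiff ℝ 1 (fderiv ℝ (fderiv ℝ u)) := hu1.fderiv_right (by norm_num)
  have hud : ∀ x, HasFDerivAt u (fderiv ℝ u x) x := fun x =>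
    ((hu.differentiable (by norm_num)) x).hasFDerivAt
  have hF1d : ∀ x, HasFDerivAt (fderiv ℝ u) (fderiv ℝ (fderiv ℝ u) x) x := fun x =>
    ((hu1.differentiable (by norm_num)) x).hasFDerivAt
  have hF2d : ∀ x, HasFDerivAt (fderiv ℝ (fderiv ℝ u))
      (fderiv ℝ (fderiv ℝ (fderiv ℝ u)) x) x := fun x =>
    ((hu2.differentiable (by norm_num)) x).hasFDerivAt
  have hn2 : ∀ x, ‖fderiv ℝ (fderiv ℝ u) x‖ ≤ M := fun x => by
    have e1 : ‖iteratedFDeriv ℝ 0 (fderiv ℝ (fderiv ℝ u)) x‖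
        = ‖iteratedFDeriv ℝ 1 (fderiv ℝ u) x‖ := norm_iteratedFDeriv_fderiv
    have e2 : ‖iteratedFDeriv ℝ 1 (fderiv ℝ u) x‖ = ‖iteratedFDeriv ℝ 2 u x‖ :=
      norm_iteratedFDeriv_fderiv
    rw [norm_iteratedFDeriv_zero] at e1
    exact (e1.trans e2).le.trans (hb2 x)
  -- the curve
  have hL : ∀ t : ℝ, HasDerivAt (fun t : ℝ => p + t • W) W t := fun t => by
    simpa using ((hasDerivAt_id t).smul_const W).const_add p
  have hL0 : p + (0:ℝ) • W = p := by simp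
  -- pointwise bounds for second and third directional derivatives
  have hgB : ∀ x, |fderiv ℝ (fderiv ℝ u) x W W| ≤ M * B^2 := fun x => by
    rw [← Real.norm_eq_abs]
    calc ‖fderiv ℝ (fderiv ℝ u) x W W‖ ≤ ‖fderiv ℝ (fderiv ℝ u) x W‖ * ‖W‖ :=
          ContinuousLinearMap.le_opNorm _ _
      _ ≤ (‖fderiv ℝ (fderiv ℝ u) x‖ * ‖W‖) * ‖W‖ := by
          gcongr
          exact ContinuousLinearMap.le_opNorm _ _
      _ ≤ (M * B) * B :=
          mul_le_mul (mul_le_mul (hn2 x) hW (norm_nonneg W) hM) hW (norm_nonneg W)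
            (by positivity)
      _ = M * B^2 := by ring
  have hgC : ∀ x, |fderiv ℝ (fderiv ℝ (fderiv ℝ u)) x W W W| ≤ M * B^3 := fun x => by
    have e3 : ‖iteratedFDeriv ℝ 2 (fderiv ℝ u) x‖ = ‖iteratedFDeriv ℝ 3 u x‖ :=
      norm_iteratedFDeriv_fderiv
    have hq : fderiv ℝ (fderiv ℝ (fderiv ℝ u)) x W W
        = iteratedFDeriv ℝ 2 (fderiv ℝ u) x ![W, W] := by
      rw [iteratedFDeriv_two_apply]; rfl
    rw [← Real.norm_eq_abs, hq]
    calc ‖iteratedFDeriv ℝ 2 (fderiv ℝ u) x ![W, W] W‖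
        ≤ ‖iteratedFDeriv ℝ 2 (fderiv ℝ u) x ![W, W]‖ * ‖W‖ :=
          ContinuousLinearMap.le_opNorm _ _
      _ ≤ (‖iteratedFDeriv ℝ 2 (fderiv ℝ u) x‖ * ∏ i : Fin 2, ‖(![W, W] : Fin 2 → E) i‖)
          * ‖W‖ := by
          gcongr
          exact ContinuousMultilinearMap.le_opNorm _ _
      _ = ‖iteratedFDeriv ℝ 3 u x‖ * ‖W‖^3 := by
          rw [e3, Fin.prod_univ_two]; simp; ring
      _ ≤ M * B^3 := by
          gcongr
          exact hb3 x
  -- derivative chain along the line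
  have hD1 : ∀ t : ℝ, HasDerivAt (fun t : ℝ => u (p + t • W))
      (fderiv ℝ u (p + t • W) W) t := fun t =>
    (hud (p + t • W)).comp_hasDerivAt t (hL t)
  have hD2 : ∀ t : ℝ, HasDerivAt (fun t : ℝ => fderiv ℝ u (p + t • W) W)
      (fderiv ℝ (fderiv ℝ u) (p + t • W) W W) t := fun t => by
    have h1 : HasFDerivAt (fun y => fderiv ℝ u y W)
        ((fderiv ℝ (fderiv ℝ u) (p + t • W)).flip W) (p + t • W) := by
      simpa using (hF1d (p + t • W)).clm_apply (hasFDerivAt_const W (p + t • W))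
    exact h1.comp_hasDerivAt t (hL t)
  have hD3 : ∀ t : ℝ, HasDerivAt (fun t : ℝ => fderiv ℝ (fderiv ℝ u) (p + t • W) W W)
      (fderiv ℝ (fderiv ℝ (fderiv ℝ u)) (p + t • W) W W W) t := fun t => by
    have h1 : HasFDerivAt (fun y => fderiv ℝ (fderiv ℝ u) y W)
        ((fderiv ℝ (fderiv ℝ (fderiv ℝ u)) (p + t • W)).flip W) (p + t • W) := by
      simpa using (hF2d (p + t • W)).clm_apply (hasFDerivAt_const W (p + t • W))
    have h2 : HasFDerivAt (fun y => fderiv ℝ (fderiv ℝ u) y W W)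
        ((((fderiv ℝ (fderiv ℝ (fderiv ℝ u)) (p + t • W)).flip W).flip) W) (p + t • W) := by
      simpa using h1.clm_apply (hasFDerivAt_const W (p + t • W))
    exact h2.comp_hasDerivAt t (hL t)
  -- MVT steps on Icc (-r) r
  have h0I : (0:ℝ) ∈ Set.Icc (-r) r := ⟨by linarith, by linarith⟩
  have hrI : r ∈ Set.Icc (-r) r := ⟨by linarith, le_rfl⟩
  have hmrI : -r ∈ Set.Icc (-r) r := ⟨le_rfl, by linarith⟩
  have htabs : ∀ t ∈ Set.Icc (-r) r, |t| ≤ r := fun t ht => abs_le.mpr ⟨ht.1, ht.2⟩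
  have hstepA : ∀ t ∈ Set.Icc (-r) r,
      |fderiv ℝ (fderiv ℝ u) (p + t • W) W W - fderiv ℝ (fderiv ℝ u) p W W|
        ≤ (M*B^3) * |t| := by
    intro t ht
    have key := Convex.norm_image_sub_le_of_norm_hasDerivWithin_le (C := M*B^3)
      (f := fun t : ℝ => fderiv ℝ (fderiv ℝ u) (p + t • W) W W)
      (f' := fun t : ℝ => fderiv ℝ (fderiv ℝ (fderiv ℝ u)) (p + t • W) W W W)
      (fun x _ => (hD3 x).hasDerivWithinAt)
      (fun x _ => by rw [Real.norm_eq_abs]; exact hgC (p + x • W))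
      (convex_Icc _ _) h0I ht
    simpa [Real.norm_eq_abs] using key
  have hstepB : ∀ t ∈ Set.Icc (-r) r,
      |fderiv ℝ u (p + t • W) W - fderiv ℝ u p W
          - t * (fderiv ℝ (fderiv ℝ u) p W W)| ≤ ((M*B^3)*r) * |t| := by
    intro t ht
    have key := Convex.norm_image_sub_le_of_norm_hasDerivWithin_le (C := (M*B^3)*r)
      (f := fun t : ℝ => fderiv ℝ u (p + t • W) W
          - t * (fderiv ℝ (fderiv ℝ u) p W W))
      (f' := fun x : ℝ => fderiv ℝ (fderiv ℝ u) (p + x • W) W W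
          - fderiv ℝ (fderiv ℝ u) p W W)
      (fun x _ => by
        have hmc : HasDerivAt (fun t : ℝ => t * (fderiv ℝ (fderiv ℝ u) p W W))
            (fderiv ℝ (fderiv ℝ u) p W W) x := by
          simpa using (hasDerivAt_id x).mul_const (fderiv ℝ (fderiv ℝ u) p W W)
        exact ((hD2 x).sub hmc).hasDerivWithinAt)
      (fun x hx => by
        rw [Real.norm_eq_abs]
        exact (hstepA x hx).trans (mul_le_mul_of_nonneg_left (htabs x hx) (by positivity)))
      (convex_Icc _ _) h0I ht
    simp only [Real.norm_eq_abs, sub_zero, zero_smul, add_zero, zero_mul] at key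
    refine le_trans (le_of_eq ?_) key
    congr 1
    ring
  have hstepB' : ∀ t ∈ Set.Icc (-r) r,
      |fderiv ℝ u (p + t • W) W - fderiv ℝ u p W| ≤ (M*B^2) * |t| := by
    intro t ht
    have key := Convex.norm_image_sub_le_of_norm_hasDerivWithin_le (C := M*B^2)
      (f := fun t : ℝ => fderiv ℝ u (p + t • W) W)
      (f' := fun x : ℝ => fderiv ℝ (fderiv ℝ u) (p + x • W) W W)
      (fun x _ => (hD2 x).hasDerivWithinAt)
      (fun x _ => by rw [Real.norm_eq_abs]; exact hgB (p + x • W))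
      (convex_Icc _ _) h0I ht
    simpa [Real.norm_eq_abs] using key
  have hstepC : ∀ t ∈ Set.Icc (-r) r,
      |u (p + t • W) - u p - t * fderiv ℝ u p W
          - t*t*(fderiv ℝ (fderiv ℝ u) p W W / 2)| ≤ ((M*B^3)*r^2) * |t| := by
    intro t ht
    have key := Convex.norm_image_sub_le_of_norm_hasDerivWithin_le (C := (M*B^3)*r^2)
      (f := fun t : ℝ => u (p + t • W) - t * fderiv ℝ u p W
          - t*t*(fderiv ℝ (fderiv ℝ u) p W W / 2))
      (f' := fun x : ℝ => fderiv ℝ u (p + x • W) W - fderiv ℝ u p W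
          - x * (fderiv ℝ (fderiv ℝ u) p W W))
      (fun x _ => by
        have h1 : HasDerivAt (fun t : ℝ => t * fderiv ℝ u p W) (fderiv ℝ u p W) x := by
          simpa using (hasDerivAt_id x).mul_const (fderiv ℝ u p W)
        have h2 : HasDerivAt (fun t : ℝ => t*t*(fderiv ℝ (fderiv ℝ u) p W W / 2))
            (x * (fderiv ℝ (fderiv ℝ u) p W W)) x := by
          have h := ((hasDerivAt_id x).mul (hasDerivAt_id x)).mul_const
            (fderiv ℝ (fderiv ℝ u) p W W / 2)
          exact h.congr_deriv (by simp; ring)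
        exact (((hD1 x).sub h1).sub h2).hasDerivWithinAt)
      (fun x hx => by
        rw [Real.norm_eq_abs]
        refine (hstepB x hx).trans ?_
        have := htabs x hx
        have hb3r : (0:ℝ) ≤ M*B^3 := by positivity
        nlinarith [mul_le_mul_of_nonneg_left this (mul_nonneg hb3r hr.le)])
      (convex_Icc _ _) h0I ht
    simp only [Real.norm_eq_abs, sub_zero, zero_smul, add_zero, zero_mul, mul_zero] at key
    refine le_trans (le_of_eq ?_) key
    congr 1
    ring
  constructor
  · have hp := hstepC r hrI
    have hm := hstepC (-r) hmrI
    have heq : u (p + r • W) - u (p + (-r) • W) - 2*r*(fderiv ℝ u p W)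
        = (u (p + r • W) - u p - r * fderiv ℝ u p W
            - r*r*(fderiv ℝ (fderiv ℝ u) p W W / 2))
          - (u (p + (-r) • W) - u p - (-r) * fderiv ℝ u p W
            - (-r)*(-r)*(fderiv ℝ (fderiv ℝ u) p W W / 2)) := by ring
    rw [heq]
    refine (abs_sub _ _).trans ?_
    have h1 : |r| = r := abs_of_pos hr
    rw [abs_neg, h1] at hm
    rw [h1] at hp
    nlinarith [hp, hm, sq_nonneg r]
  · have key := Convex.norm_image_sub_le_of_norm_hasDerivWithin_le (C := (M*B^2)*r)
      (f := fun t : ℝ => u (p + t • W) - t * fderiv ℝ u p W)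
      (f' := fun x : ℝ => fderiv ℝ u (p + x • W) W - fderiv ℝ u p W)
      (fun x _ => by
        have h1 : HasDerivAt (fun t : ℝ => t * fderiv ℝ u p W) (fderiv ℝ u p W) x := by
          simpa using (hasDerivAt_id x).mul_const (fderiv ℝ u p W)
        exact ((hD1 x).sub h1).hasDerivWithinAt)
      (fun x hx => by
        rw [Real.norm_eq_abs]
        refine (hstepB' x hx).trans ?_
        have := htabs x hx
        have : (0:ℝ) ≤ M*B^2 := by positivity
        nlinarith [htabs x hx])
      (convex_Icc _ _) h0I hrI
    simp only [Real.norm_eq_abs, sub_zero, zero_smul, add_zero, zero_mul, mul_zero] at key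
    have h1 : |r| = r := abs_of_pos hr
    rw [h1] at key
    refine le_trans (le_of_eq ?_) (key.trans ?_)
    · congr 1; ring
    · nlinarith [hr.le, sq_nonneg r]
/-- The second-order differential operator
`𝒜_{A,β} v (y) = (1/2) ∑_{i,j} A i j ∂²v/∂yᵢ∂yⱼ (y) + ∑ i, β i ∂v/∂yᵢ (y)`. -/
noncomputable def stickyGen {d : ℕ} (A : Matrix (Fin d) (Fin d) ℝ) (β : Fin d → ℝ)
    (v : (Fin d → ℝ) → ℝ) (y : Fin d → ℝ) : ℝ :=
  (1 / 2) * ∑ i, ∑ j, A i j *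
      iteratedFDeriv ℝ 2 v y ![Pi.single i 1, Pi.single j 1]
    + ∑ i, β i * fderiv ℝ v y (Pi.single i 1)

set_option maxHeartbeats 2000000 in
/-- Lemma 4.3 (Case IIIa of the sticky Euler scheme): one-step error estimate for the
symmetrized step around a boundary point `z` with inward unit normal `n`. -/
theorem sticky_euler_caseIIIa_one_step (d : ℕ) (hd : 1 ≤ d) (M : ℝ) (hM : 0 < M) :
    ∃ C : ℝ, 0 < C ∧
      ∀ u : ℝ × (Fin d → ℝ) → ℝ, ContDiff ℝ 3 u →
      (∀ m : ℕ, m ≤ 3 → ∀ p : ℝ × (Fin d → ℝ), ‖iteratedFDeriv ℝ m u p‖ ≤ M) →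
      ∀ A : Matrix (Fin d) (Fin d) ℝ, A.IsSymm → (∀ i j, |A i j| ≤ M) →
      ∀ β : Fin d → ℝ, (∀ i, |β i| ≤ M) →
      ∀ μ : ℝ, 0 < μ → μ ≤ M →
      ∀ γ c g ψ κ : ℝ, |γ| ≤ M → |c| ≤ M → |g| ≤ M → |ψ| ≤ M → |κ| ≤ M →
      ∀ z n : Fin d → ℝ, (∑ i, (n i) ^ 2 = 1) →
      ∀ s : ℝ,
      -- the parabolic PDE holds at (s, z)
      (deriv (fun τ => u (τ, z)) s + stickyGen A β (fun y => u (s, y)) z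
          + c * u (s, z) + g = 0) →
      -- the sticky (second-order) boundary relation holds at (s, z)
      (-μ * stickyGen A β (fun y => u (s, y)) z
          + fderiv ℝ (fun y => u (s, y)) z n + γ * u (s, z) = ψ) →
      ∀ h r : ℝ, 0 < h → h < 1 → 0 < r → r ≤ Real.sqrt h →
      ∀ Yk Z' : ℝ, 0 < Yk →
      |u (s + μ * r, z + r • n) *
            ((1 + h * κ) * Yk +
              (2 * r * γ + 2 * r * μ * c + 2 * r ^ 2 * γ ^ 2
                + 4 * r ^ 2 * μ * γ * c + 2 * r ^ 2 * μ ^ 2 * c ^ 2) * Yk)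
          + (Z' + (-(2 * r * ψ) - 2 * r ^ 2 * γ * ψ - 2 * r ^ 2 * μ * c * ψ
                + 2 * r * μ * g + 2 * r ^ 2 * μ * γ * g
                + 2 * r ^ 2 * μ ^ 2 * c * g) * Yk)
          - u (s - μ * r, z - r • n) * ((1 + h * κ) * Yk) - Z'|
        ≤ C * h * r * Yk := by
  refine ⟨2*M*(M+1)^2*(M + M^2*(M+1)^2) + 2*M^2*(M+1)^3*(1+M*(M+1)) + 2*M*(M+1)^4,
    by positivity, ?_⟩
  intro u hu hbound A hAsymm hA β hβ μ hμ0 hμM γ c g ψ κ hγ hc hg hψ hκ z n hn s hPDE hBC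
    h r hh0 hh1 hr0 hrh Yk Z' hYk
  have hmul : ∀ x y X Y : ℝ, |x| ≤ X → |y| ≤ Y → |x*y| ≤ X*Y := by
    intro x y X Y hx hy
    rw [abs_mul]
    exact mul_le_mul hx hy (abs_nonneg y) ((abs_nonneg x).trans hx)
  -- numeric facts
  have hsq1 : Real.sqrt h ≤ 1 := by
    rw [show (1:ℝ) = Real.sqrt 1 by simp]
    exact Real.sqrt_le_sqrt hh1.le
  have hr1 : r ≤ 1 := hrh.trans hsq1
  have hr2 : r^2 ≤ h := by
    have h2 : r*r ≤ Real.sqrt h * Real.sqrt h :=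
      mul_le_mul hrh hrh hr0.le (Real.sqrt_nonneg h)
    rw [Real.mul_self_sqrt hh0.le] at h2
    nlinarith
  have hr3 : r^3 ≤ h*r := by nlinarith
  -- norm of the direction vector
  have hni : ∀ i, |n i| ≤ 1 := by
    intro i
    have h1 : n i ^ 2 ≤ 1 := by
      rw [← hn]
      exact Finset.single_le_sum (fun j _ => sq_nonneg (n j)) (Finset.mem_univ i)
    nlinarith [abs_nonneg (n i), sq_abs (n i)]
  have hW : ‖((μ, n) : ℝ × (Fin d → ℝ))‖ ≤ M + 1 := by
    rw [Prod.norm_def]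
    refine max_le ?_ ?_
    · rw [Real.norm_eq_abs, abs_of_pos hμ0]; linarith
    · have h1 : ‖n‖ ≤ 1 := (pi_norm_le_iff_of_nonneg zero_le_one).mpr
        (fun i => by rw [Real.norm_eq_abs]; exact hni i)
      linarith
  have hb2 : ∀ x, ‖iteratedFDeriv ℝ 2 u x‖ ≤ M := hbound 2 (by norm_num)
  have hb3 : ∀ x, ‖iteratedFDeriv ℝ 3 u x‖ ≤ M := hbound 3 le_rfl
  have hu0 : |u (s, z)| ≤ M := by
    have h0 := hbound 0 (by norm_num) (s, z)
    rwa [norm_iteratedFDeriv_zero, Real.norm_eq_abs] at h0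
  have hμabs : |μ| ≤ M := by rw [abs_of_pos hμ0]; exact hμM
  have hSb : |γ + μ*c| ≤ M*(M+1) := by
    refine (abs_add_le _ _).trans ?_
    have h1 := hmul μ c M M hμabs hc
    nlinarith
  have haB : |(ψ - μ*g) - (γ + μ*c)*u (s, z)| ≤ M*(M+1)^2 := by
    have h1 := abs_sub (ψ - μ*g) ((γ + μ*c)*u (s, z))
    have h2 := abs_sub ψ (μ*g)
    have h3 := hmul μ g M M hμabs hg
    have h4 := hmul (γ + μ*c) (u (s, z)) (M*(M+1)) M hSb hu0
    nlinarith
  have hX1 : |h*κ + r^2*(γ + μ*c)^2| ≤ h*(M + M^2*(M+1)^2) := by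
    refine (abs_add_le _ _).trans ?_
    have h1 := hmul h κ h M (le_of_eq (abs_of_pos hh0)) hκ
    have h2 : |r^2*(γ + μ*c)^2| ≤ h*(M^2*(M+1)^2) := by
      rw [abs_of_nonneg (by positivity)]
      have h3 : (γ + μ*c)^2 ≤ (M*(M+1))^2 := by
        rw [← sq_abs]
        exact pow_le_pow_left₀ (abs_nonneg _) hSb 2
      nlinarith [sq_nonneg (γ + μ*c), hh0.le, hr2]
    nlinarith
  have hp2a : |1 + r*(γ + μ*c)| ≤ 1 + M*(M+1) := by
    refine (abs_add_le _ _).trans ?_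
    have h1 := hmul r (γ + μ*c) 1 (M*(M+1)) (by rw [abs_of_pos hr0]; exact hr1) hSb
    simp only [abs_one]
    nlinarith
  have hp2b : |1 + h*κ| ≤ 1 + M := by
    refine (abs_add_le _ _).trans ?_
    have h1 := hmul h κ 1 M (by rw [abs_of_pos hh0]; exact hh1.le) hκ
    simp only [abs_one]
    nlinarith
  have h2r : (0:ℝ) < 2*r := by linarith
  obtain ⟨hE1, hE2⟩ := taylor_sym_aux u hu M (M+1) hM.le (by linarith) hb2 hb3
    (s, z) (μ, n) hW r hr0
  -- identify the shifted points
  have hPr : ((s, z) : ℝ × (Fin d → ℝ)) + r • (μ, n) = (s + μ * r, z + r • n) := by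
    rw [Prod.smul_mk, Prod.mk_add_mk, Prod.mk.injEq]
    constructor
    · rw [smul_eq_mul]; ring
    · rfl
  have hPm : ((s, z) : ℝ × (Fin d → ℝ)) + (-r) • (μ, n) = (s - μ * r, z - r • n) := by
    rw [Prod.smul_mk, Prod.mk_add_mk, Prod.mk.injEq]
    constructor
    · rw [smul_eq_mul]; ring
    · rw [neg_smul, ← sub_eq_add_neg]
  -- identify the directional derivative using the PDE and boundary relation
  have hud : HasFDerivAt u (fderiv ℝ u (s, z)) (s, z) :=
    ((hu.differentiable (by norm_num)) (s, z)).hasFDerivAt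
  have hT : deriv (fun τ => u (τ, z)) s = fderiv ℝ u (s, z) (1, 0) := by
    have h1 : HasDerivAt (fun τ : ℝ => ((τ, z) : ℝ × (Fin d → ℝ)))
        ((1:ℝ), (0 : Fin d → ℝ)) s := (hasDerivAt_id s).prodMk (hasDerivAt_const s z)
    exact (hud.comp_hasDerivAt s h1).deriv
  have hN : fderiv ℝ (fun y => u (s, y)) z n = fderiv ℝ u (s, z) (0, n) := by
    have h1 := hasFDerivAt_prodMk_right (𝕜 := ℝ) s z
    have h2 : HasFDerivAt (fun y => u (s, y))
        ((fderiv ℝ u (s, z)).comp (ContinuousLinearMap.inr ℝ ℝ (Fin d → ℝ))) z :=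
      hud.comp z h1
    rw [h2.fderiv]
    simp
  have hsum : fderiv ℝ u (s, z) (μ, n)
      = μ * (fderiv ℝ u (s, z) (1, 0)) + fderiv ℝ u (s, z) (0, n) := by
    have hmn : ((μ, n) : ℝ × (Fin d → ℝ)) = μ • ((1:ℝ), (0 : Fin d → ℝ)) + ((0:ℝ), n) := by
      rw [Prod.smul_mk, Prod.mk_add_mk, Prod.mk.injEq]
      constructor
      · rw [smul_eq_mul]; ring
      · rw [smul_zero, zero_add]
    rw [hmn, map_add, map_smul, smul_eq_mul]
  have ha : fderiv ℝ u (s, z) (μ, n) = (ψ - μ*g) - (γ + μ*c) * u (s, z) := by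
    rw [hsum, ← hT, ← hN]
    linear_combination μ * hPDE + hBC
  rw [hPr, hPm, ha] at hE1
  rw [hPr, ha] at hE2
  set uP := u (s + μ * r, z + r • n) with huPd
  set uM := u (s - μ * r, z - r • n) with huMd
  set u0 := u (s, z) with hu0d
  set e1 := uP - uM - 2 * r * ((ψ - μ*g) - (γ + μ*c) * u0) with he1d
  set e2 := uP - u0 - r * ((ψ - μ*g) - (γ + μ*c) * u0) with he2d
  -- the exact algebraic identity
  have key : uP * ((1 + h * κ) * Yk +
        (2 * r * γ + 2 * r * μ * c + 2 * r ^ 2 * γ ^ 2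
          + 4 * r ^ 2 * μ * γ * c + 2 * r ^ 2 * μ ^ 2 * c ^ 2) * Yk)
      + (Z' + (-(2 * r * ψ) - 2 * r ^ 2 * γ * ψ - 2 * r ^ 2 * μ * c * ψ
          + 2 * r * μ * g + 2 * r ^ 2 * μ * γ * g
          + 2 * r ^ 2 * μ ^ 2 * c * g) * Yk)
      - uM * ((1 + h * κ) * Yk) - Z'
      = (2*r*((ψ - μ*g) - (γ + μ*c)*u0) * (h*κ + r^2*(γ + μ*c)^2)
          + 2*r*(γ + μ*c)*(1 + r*(γ + μ*c)) * e2 + e1 * (1 + h*κ)) * Yk := by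
    rw [he1d, he2d]
    ring
  rw [key, abs_mul, abs_of_pos hYk]
  have hT1 : |2*r*((ψ - μ*g) - (γ + μ*c)*u0) * (h*κ + r^2*(γ + μ*c)^2)|
      ≤ (2*M*(M+1)^2*(M + M^2*(M+1)^2)) * (h*r) := by
    have h0 : |2*r*((ψ - μ*g) - (γ + μ*c)*u0)| ≤ (2*r)*(M*(M+1)^2) :=
      hmul (2*r) _ (2*r) (M*(M+1)^2) (le_of_eq (abs_of_pos h2r)) haB
    have h1 := hmul _ _ _ _ h0 hX1
    refine h1.trans (le_of_eq ?_)
    ring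
  have hT2 : |2*r*(γ + μ*c)*(1 + r*(γ + μ*c)) * e2|
      ≤ (2*M^2*(M+1)^3*(1+M*(M+1))) * (h*r) := by
    have p1 : |2*r*(γ + μ*c)| ≤ (2*r)*(M*(M+1)) :=
      hmul (2*r) _ (2*r) _ (le_of_eq (abs_of_pos h2r)) hSb
    have p12 := hmul _ _ _ _ p1 hp2a
    have p3 : |e2| ≤ M*(M+1)^2*r^2 := hE2
    have pAll := hmul _ _ _ _ p12 p3
    refine pAll.trans ?_
    have hq : ((2*r)*(M*(M+1))*(1 + M*(M+1))) * (M*(M+1)^2*r^2)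
        = (2*M^2*(M+1)^3*(1+M*(M+1))) * (r^3) := by ring
    rw [hq]
    exact mul_le_mul_of_nonneg_left hr3 (by positivity)
  have hT3 : |e1 * (1 + h*κ)| ≤ (2*M*(M+1)^4) * (h*r) := by
    have p1 : |e1| ≤ 2*(M*(M+1)^3)*r^3 := hE1
    have pAll := hmul _ _ _ _ p1 hp2b
    refine pAll.trans ?_
    have hq : (2*(M*(M+1)^3)*r^3) * (1 + M) = (2*M*(M+1)^4) * (r^3) := by ring
    rw [hq]
    exact mul_le_mul_of_nonneg_left hr3 (by positivity)
  have htri : |2*r*((ψ - μ*g) - (γ + μ*c)*u0) * (h*κ + r^2*(γ + μ*c)^2)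
      + 2*r*(γ + μ*c)*(1 + r*(γ + μ*c)) * e2 + e1 * (1 + h*κ)|
      ≤ ((2*M*(M+1)^2*(M + M^2*(M+1)^2)) + (2*M^2*(M+1)^3*(1+M*(M+1)))
          + (2*M*(M+1)^4)) * (h*r) := by
    refine ((abs_add_le _ _).trans (add_le_add_left (abs_add_le _ _) _)).trans ?_
    refine (add_le_add (add_le_add hT1 hT2) hT3).trans (le_of_eq (by ring))
  refine (mul_le_mul_of_nonneg_right htri hYk.le).trans (le_of_eq ?_)
  ring
end

section
/- Let d ≥ 1 and M > 0. There exists a constant C > 0 depending only on d and M such that the following holds. Let u : ℝ × ℝ^d → ℝ be twice continuously differentiable with all partial derivatives (jointly in time and space) of order ≤ 2 bounded in absolute value by M, let φ : ℝ^d → ℝ be twice continuously differentiable with all partial derivatives of order ≤ 2 bounded in absolute value by M, and suppose u(T, x) = φ(x) for all x ∈ ℝ^d, where T ∈ ℝ. Let A ∈ ℝ^{d×d} be symmetric and β ∈ ℝ^d with all entries bounded in absolute value by M; let μ ∈ (0, M], γ̄, c̄, ḡ, ψ̄, κ ∈ [−M, M], z ∈ ℝ^d, and let n ∈ ℝ^d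 be a unit vector. Assume: (PDE at (T,z)) ∂_t u(T,z) + 𝒜_{A,β}φ(z) + c̄ φ(z) + ḡ = 0, and (sticky boundary relation at (T,z)) −μ 𝒜_{A,β}φ(z) + ∇φ(z)·n + γ̄ φ(z) = ψ̄. Let h ∈ (0,1), r ∈ (0, √h], and t′ ∈ ℝ with t′ ≤ T ≤ t′ + 2μr, and set p := (T − t′)/(2μ) (so 0 ≤ p ≤ r). Let Y_k > 0, Z′ ∈ ℝ, and define Y′ = (1 + hκ)Y_k, Y_χ = Y′ + 2rγ̄ Y_k + 2pμc̄ Y_k, and Z_χ = Z′ − 2μ(r − p) 𝒜_{A,β}φ(z) Y_k + 2pμḡ Y_k − 2rψ̄ Y_k. Then |u(T, z + rn)·Y_χ + Z_χ − u(t′, z − rn)·Y′ − Z′| ≤ C h Y_k. -/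
/-!
With `2pμ = T - t'`, the PDE and the boundary relation eliminate `g`, `ψ` and `𝒜φ(z)`, leaving
`Yk * ((1 + hκ) R + hκ (2r ∂ₙφ(z) + (T - t') ∂ₜu(T, z)) + (φ(z + rn) - φ(z)) (2rγ + (T - t') c))`
with `R = φ(z + rn) - u(t', z - rn) - 2r ∂ₙφ(z) - (T - t') ∂ₜu(T, z)`. Because `u(T, ·) = φ`, `R` is
the difference of the second-order Taylor remainders of `φ` at `z` in direction `rn` and of `u` at
`(T, z)` in direction `(t' - T, -rn)`. As `0 ≤ T - t' ≤ 2Mr` and `r² ≤ h`, every term is `O(h)`.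
-/

open Set

section Taylor

variable {E F : Type*} [NormedAddCommGroup E] [NormedSpace ℝ E]
  [NormedAddCommGroup F] [NormedSpace ℝ F]

theorem norm_image_add_sub_sub_fderiv_le {f : E → F} (hf : Differentiable ℝ f)
    (hf' : Differentiable ℝ (fderiv ℝ f)) {M : ℝ} (hM : ∀ x, ‖fderiv ℝ (fderiv ℝ f) x‖ ≤ M)
    (x v : E) : ‖f (x + v) - f x - fderiv ℝ f x v‖ ≤ M * ‖v‖ ^ 2 := by
  set L := fderiv ℝ f x
  have hderiv : ∀ y ∈ Metric.closedBall x ‖v‖,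
      HasFDerivWithinAt (fun y => f y - L y) (fderiv ℝ f y - L) (Metric.closedBall x ‖v‖) y :=
    fun y _ => ((hf y).hasFDerivAt.sub L.hasFDerivAt).hasFDerivWithinAt
  have hbound : ∀ y ∈ Metric.closedBall x ‖v‖, ‖fderiv ℝ f y - L‖ ≤ M * ‖v‖ := by
    intro y hy
    calc ‖fderiv ℝ f y - L‖ ≤ M * ‖y - x‖ :=
          Convex.norm_image_sub_le_of_norm_fderiv_le (fun z _ => hf' z) (fun z _ => hM z)
            convex_univ (mem_univ x) (mem_univ y)
      _ ≤ M * ‖v‖ := by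
          gcongr
          · exact (norm_nonneg (fderiv ℝ (fderiv ℝ f) x)).trans (hM x)
          · simpa [dist_eq_norm] using hy
  have := (convex_closedBall x ‖v‖).norm_image_sub_le_of_norm_hasFDerivWithin_le hderiv hbound
    (y := x + v) (Metric.mem_closedBall_self (norm_nonneg v)) (by simp [dist_eq_norm])
  calc ‖f (x + v) - f x - L v‖ = ‖(f (x + v) - L (x + v)) - (f x - L x)‖ := by
        rw [map_add]; congr 1; abel
    _ ≤ M * ‖v‖ * ‖x + v - x‖ := this
    _ = M * ‖v‖ ^ 2 := by rw [add_sub_cancel_left]; ring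

theorem norm_fderiv_fderiv_eq_norm_iteratedFDeriv_two (f : E → F) (x : E) :
    ‖fderiv ℝ (fderiv ℝ f) x‖ = ‖iteratedFDeriv ℝ 2 f x‖ := by
  rw [← norm_iteratedFDeriv_one, norm_iteratedFDeriv_fderiv]

theorem fderiv_apply_prod_eq {u : ℝ × E → F} {t : ℝ} {y : E} (hu : DifferentiableAt ℝ u (t, y))
    (s : ℝ) (w : E) :
    fderiv ℝ u (t, y) (s, w)
      = s • deriv (fun τ => u (τ, y)) t + fderiv ℝ (fun x => u (t, x)) y w := by
  have htime : deriv (fun τ => u (τ, y)) t = fderiv ℝ u (t, y) (1, 0) :=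
    (hu.hasFDerivAt.comp_hasDerivAt t ((hasDerivAt_id t).prodMk (hasDerivAt_const t y))).deriv
  have hspace : fderiv ℝ (fun x => u (t, x)) y = (fderiv ℝ u (t, y)).comp (.inr ℝ ℝ E) :=
    (hu.hasFDerivAt.comp y (hasFDerivAt_prodMk_right t y)).fderiv
  rw [htime, hspace, ContinuousLinearMap.comp_apply, ContinuousLinearMap.inr_apply, ← map_smul,
    ← map_add, Prod.smul_mk, Prod.mk_add_mk, smul_eq_mul, mul_one, smul_zero, add_zero, zero_add]

theorem norm_deriv_comp_prodMk_le {u : ℝ × E → F} {t : ℝ} {y : E}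
    (hu : DifferentiableAt ℝ u (t, y)) :
    ‖deriv (fun τ => u (τ, y)) t‖ ≤ ‖fderiv ℝ u (t, y)‖ := by
  simpa [fderiv_apply_prod_eq hu] using (fderiv ℝ u (t, y)).le_opNorm (1, 0)

end Taylor

theorem norm_le_one_of_sum_sq_eq_one {ι : Type*} [Fintype ι] {x : ι → ℝ}
    (hx : ∑ i, x i ^ 2 = 1) : ‖x‖ ≤ 1 := by
  refine (pi_norm_le_iff_of_nonneg zero_le_one).2 fun i => ?_
  rw [Real.norm_eq_abs, ← sq_le_one_iff_abs_le_one, ← hx]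
  exact Finset.single_le_sum (fun j _ => sq_nonneg (x j)) (Finset.mem_univ i)

theorem caseIIIb_residual_eq {μ : ℝ} (hμ : μ ≠ 0)
    {Up Um φz F D G c g γ ψ h κ r T t' Yk Z' : ℝ}
    (hpde : D + G + c * φz + g = 0) (hbdry : -μ * G + F + γ * φz = ψ) :
    Up * ((1 + h * κ) * Yk + 2 * r * γ * Yk + 2 * ((T - t') / (2 * μ)) * μ * c * Yk)
        + (Z' - 2 * μ * (r - (T - t') / (2 * μ)) * G * Yk
          + 2 * ((T - t') / (2 * μ)) * μ * g * Yk - 2 * r * ψ * Yk)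
        - Um * ((1 + h * κ) * Yk) - Z'
      = Yk * ((1 + h * κ) * (Up - Um - 2 * r * F - (T - t') * D)
          + h * κ * (2 * r * F + (T - t') * D) + (Up - φz) * (2 * r * γ + (T - t') * c)) := by
  have hp : 2 * ((T - t') / (2 * μ)) * μ = T - t' := by field_simp
  have hq : 2 * μ * (r - (T - t') / (2 * μ)) = 2 * μ * r - (T - t') := by field_simp
  rw [hp, hq]
  linear_combination (2 * r * Yk) * hbdry + ((T - t') * Yk) * hpde

theorem abs_caseIIIb_residual_le {M K h r s κ γ c F D R V : ℝ} (hM : 0 ≤ M) (hh : 0 < h)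
    (hh1 : h ≤ 1) (hr : 0 ≤ r) (hrh : r ^ 2 ≤ h) (hs : 0 ≤ s) (hsr : s ≤ 2 * M * r)
    (hκ : |κ| ≤ M) (hγ : |γ| ≤ M) (hc : |c| ≤ M) (hF : |F| ≤ M) (hD : |D| ≤ M)
    (hR : |R| ≤ K * h) (hV : |V| ≤ M * r) :
    |(1 + h * κ) * R + h * κ * (2 * r * F + s * D) + V * (2 * r * γ + s * c)|
      ≤ (1 + M) * (K + 4 * M ^ 2) * h := by
  have hr1 : r ≤ 1 := by nlinarith
  have hK : 0 ≤ K := nonneg_of_mul_nonneg_left ((abs_nonneg R).trans hR) hh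
  have h1 : |1 + h * κ| ≤ 1 + M := by
    calc |1 + h * κ| ≤ 1 + h * |κ| := by
          simpa [abs_mul, abs_of_pos hh] using abs_add_le 1 (h * κ)
      _ ≤ 1 + M := by nlinarith [abs_nonneg κ]
  have h2 : |h * κ * (2 * r * F + s * D)| ≤ 2 * M ^ 2 * (1 + M) * h := by
    have : |2 * r * F + s * D| ≤ 2 * M * (1 + M) := by
      calc |2 * r * F + s * D| ≤ 2 * r * |F| + s * |D| := by
            simpa [abs_mul, abs_of_nonneg hr, abs_of_nonneg hs] using abs_add_le (2 * r * F) (s * D)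
        _ ≤ 2 * M * (1 + M) := by
            nlinarith [mul_le_mul hr1 hF (abs_nonneg F) zero_le_one,
              mul_le_mul hsr hD (abs_nonneg D) (by positivity), mul_nonneg hM hM]
    rw [abs_mul, abs_mul, abs_of_pos hh]
    calc h * |κ| * |2 * r * F + s * D| ≤ h * M * (2 * M * (1 + M)) := by gcongr
      _ = 2 * M ^ 2 * (1 + M) * h := by ring
  have h3 : |V * (2 * r * γ + s * c)| ≤ 2 * M ^ 2 * (1 + M) * h := by
    have : |2 * r * γ + s * c| ≤ 2 * M * (1 + M) * r := by
      calc |2 * r * γ + s * c| ≤ 2 * r * |γ| + s * |c| := by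
            simpa [abs_mul, abs_of_nonneg hr, abs_of_nonneg hs] using abs_add_le (2 * r * γ) (s * c)
        _ ≤ 2 * M * (1 + M) * r := by
            nlinarith [mul_le_mul_of_nonneg_left hγ hr,
              mul_le_mul hsr hc (abs_nonneg c) (by positivity)]
    rw [abs_mul]
    calc |V| * |2 * r * γ + s * c| ≤ M * r * (2 * M * (1 + M) * r) := by gcongr
      _ = 2 * M ^ 2 * (1 + M) * r ^ 2 := by ring
      _ ≤ 2 * M ^ 2 * (1 + M) * h := by gcongr
  calc _ ≤ |(1 + h * κ) * R| + |h * κ * (2 * r * F + s * D)| + |V * (2 * r * γ + s * c)| :=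
        abs_add_three _ _ _
    _ ≤ (1 + M) * (K * h) + 2 * M ^ 2 * (1 + M) * h + 2 * M ^ 2 * (1 + M) * h := by
        rw [abs_mul]; gcongr
    _ = (1 + M) * (K + 4 * M ^ 2) * h := by ring

theorem abs_terminal_taylor_le {E : Type*} [NormedAddCommGroup E] [NormedSpace ℝ E]
    {u : ℝ × E → ℝ} {φ : E → ℝ} (hu : ContDiff ℝ 2 u) (hφ : ContDiff ℝ 2 φ) {T : ℝ}
    (hTφ : ∀ x, u (T, x) = φ x) {M : ℝ} (hu2 : ∀ p, ‖fderiv ℝ (fderiv ℝ u) p‖ ≤ M)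
    (hφ2 : ∀ x, ‖fderiv ℝ (fderiv ℝ φ) x‖ ≤ M) {z w : E} {t' ρ : ℝ} (hw : ‖w‖ ≤ ρ)
    (ht' : |T - t'| ≤ ρ) :
    |φ (z + w) - u (t', z - w) - 2 * fderiv ℝ φ z w - (T - t') * deriv (fun τ => u (τ, z)) T|
      ≤ 2 * M * ρ ^ 2 := by
  have hM : 0 ≤ M := (norm_nonneg (fderiv ℝ (fderiv ℝ φ) z)).trans (hφ2 z)
  have hu' : Differentiable ℝ u := hu.differentiable two_ne_zero
  have hspace := norm_image_add_sub_sub_fderiv_le (hφ.differentiable two_ne_zero)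
    ((hφ.fderiv_right (m := 1) le_rfl).differentiable one_ne_zero) hφ2 z w
  have htime := norm_image_add_sub_sub_fderiv_le hu'
    ((hu.fderiv_right (m := 1) le_rfl).differentiable one_ne_zero) hu2 (T, z) (t' - T, -w)
  have hslice : (fun x => u (T, x)) = φ := funext hTφ
  rw [fderiv_apply_prod_eq (hu' _), hslice, hTφ, Prod.mk_add_mk, add_sub_cancel,
    ← sub_eq_add_neg, map_neg, smul_eq_mul] at htime
  have hnorm : ‖((t' - T, -w) : ℝ × E)‖ ≤ ρ :=
    norm_prod_le_iff.2 ⟨by rwa [Real.norm_eq_abs, abs_sub_comm], by rwa [norm_neg]⟩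
  have hw2 : ‖w‖ ^ 2 ≤ ρ ^ 2 := pow_le_pow_left₀ (norm_nonneg w) hw 2
  have hn2 : ‖((t' - T, -w) : ℝ × E)‖ ^ 2 ≤ ρ ^ 2 := pow_le_pow_left₀ (norm_nonneg _) hnorm 2
  rw [Real.norm_eq_abs] at hspace htime
  rw [abs_le] at hspace htime ⊢
  constructor <;> nlinarith [mul_le_mul_of_nonneg_left hw2 hM, mul_le_mul_of_nonneg_left hn2 hM]

theorem sticky_euler_caseIIIb_one_step_general (d : ℕ) (M : ℝ) (hM : 0 < M) :
    ∃ C : ℝ, 0 < C ∧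
      ∀ u : ℝ × (Fin d → ℝ) → ℝ, ContDiff ℝ 2 u →
      (∀ m : ℕ, m ≤ 2 → ∀ p : ℝ × (Fin d → ℝ), ‖iteratedFDeriv ℝ m u p‖ ≤ M) →
      ∀ φ : (Fin d → ℝ) → ℝ, ContDiff ℝ 2 φ →
      (∀ m : ℕ, m ≤ 2 → ∀ y : Fin d → ℝ, ‖iteratedFDeriv ℝ m φ y‖ ≤ M) →
      ∀ T : ℝ, (∀ x : Fin d → ℝ, u (T, x) = φ x) →
      ∀ A : Matrix (Fin d) (Fin d) ℝ, A.IsSymm → (∀ i j, |A i j| ≤ M) →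
      ∀ β : Fin d → ℝ, (∀ i, |β i| ≤ M) →
      ∀ μ : ℝ, 0 < μ → μ ≤ M →
      ∀ γ c g ψ κ : ℝ, |γ| ≤ M → |c| ≤ M → |g| ≤ M → |ψ| ≤ M → |κ| ≤ M →
      ∀ z n : Fin d → ℝ, (∑ i, (n i) ^ 2 = 1) →
      -- the parabolic PDE holds at (T, z)
      (deriv (fun τ => u (τ, z)) T + stickyGen A β φ z + c * φ z + g = 0) →
      -- the sticky (second-order) boundary relation holds at (T, z)
      (-μ * stickyGen A β φ z + fderiv ℝ φ z n + γ * φ z = ψ) →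
      ∀ h r t' : ℝ, 0 < h → h < 1 → 0 < r → r ≤ Real.sqrt h →
      t' ≤ T → T ≤ t' + 2 * μ * r →
      ∀ Yk Z' : ℝ, 0 < Yk →
      |u (T, z + r • n) *
            ((1 + h * κ) * Yk + 2 * r * γ * Yk
              + 2 * ((T - t') / (2 * μ)) * μ * c * Yk)
          + (Z' - 2 * μ * (r - (T - t') / (2 * μ)) * stickyGen A β φ z * Yk
              + 2 * ((T - t') / (2 * μ)) * μ * g * Yk - 2 * r * ψ * Yk)
          - u (t', z - r • n) * ((1 + h * κ) * Yk) - Z'|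
        ≤ C * h * Yk := by
  refine ⟨(1 + M) * (2 * M * (2 * M + 1) ^ 2 + 4 * M ^ 2), by positivity, ?_⟩
  intro u hu hub φ hφ hφb T hTφ A _ _ β _ μ hμ hμM γ c g ψ κ hγ hc _ _ hκ z n hn hpde hbdry
    h r t' hh hh1 hr hrh ht'T hTt' Yk Z' hYk
  have hu1 (p) : ‖fderiv ℝ u p‖ ≤ M := norm_iteratedFDeriv_one (𝕜 := ℝ) u ▸ hub 1 one_le_two p
  have hφ1 (x) : ‖fderiv ℝ φ x‖ ≤ M := norm_iteratedFDeriv_one (𝕜 := ℝ) φ ▸ hφb 1 one_le_two x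
  have hu2 (p) : ‖fderiv ℝ (fderiv ℝ u) p‖ ≤ M :=
    norm_fderiv_fderiv_eq_norm_iteratedFDeriv_two u p ▸ hub 2 le_rfl p
  have hφ2 (x) : ‖fderiv ℝ (fderiv ℝ φ) x‖ ≤ M :=
    norm_fderiv_fderiv_eq_norm_iteratedFDeriv_two φ x ▸ hφb 2 le_rfl x
  have hr2 : r ^ 2 ≤ h := by simpa [Real.sq_sqrt hh.le] using pow_le_pow_left₀ hr.le hrh 2
  have hrn : ‖r • n‖ ≤ r := by
    simpa [norm_smul, abs_of_pos hr] using
      mul_le_mul_of_nonneg_left (norm_le_one_of_sum_sq_eq_one hn) hr.le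
  have hs : T - t' ≤ 2 * M * r := by nlinarith
  have hR := abs_terminal_taylor_le hu hφ hTφ hu2 hφ2 (z := z) (t' := t') (ρ := (2 * M + 1) * r)
    (by nlinarith) (by rw [abs_of_nonneg (sub_nonneg.2 ht'T)]; nlinarith)
  rw [map_smul, smul_eq_mul, mul_pow, ← mul_assoc, ← mul_assoc] at hR
  have hV : |φ (z + r • n) - φ z| ≤ M * r := by
    have := convex_univ.norm_image_sub_le_of_norm_fderiv_le
      (fun x _ => hφ.differentiable two_ne_zero x) (fun x _ => hφ1 x) (mem_univ z)
      (mem_univ (z + r • n))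
    rw [add_sub_cancel_left, Real.norm_eq_abs] at this
    exact this.trans (by gcongr)
  have hD : |deriv (fun τ => u (τ, z)) T| ≤ M :=
    (norm_deriv_comp_prodMk_le (hu.differentiable two_ne_zero _)).trans (hu1 _)
  have hF : |fderiv ℝ φ z n| ≤ M := by
    simpa using (fderiv ℝ φ z).le_of_opNorm_le_of_le (hφ1 z) (norm_le_one_of_sum_sq_eq_one hn)
  rw [caseIIIb_residual_eq hμ.ne' hpde hbdry, abs_mul, abs_of_pos hYk, mul_comm, hTφ]
  gcongr
  exact abs_caseIIIb_residual_le hM.le hh hh1.le hr.le hr2 (sub_nonneg.2 ht'T) hs hκ hγ hc hF hD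
    (hR.trans (by gcongr)) hV

/-- Lemma 4.4 (Case IIIb of the sticky Euler scheme): one-step error estimate for the
terminal-time correction step, where the sticky time update overshoots `T`. -/
theorem sticky_euler_caseIIIb_one_step (d : ℕ) (hd : 1 ≤ d) (M : ℝ) (hM : 0 < M) :
    ∃ C : ℝ, 0 < C ∧
      ∀ u : ℝ × (Fin d → ℝ) → ℝ, ContDiff ℝ 2 u →
      (∀ m : ℕ, m ≤ 2 → ∀ p : ℝ × (Fin d → ℝ), ‖iteratedFDeriv ℝ m u p‖ ≤ M) →
      ∀ φ : (Fin d → ℝ) → ℝ, ContDiff ℝ 2 φ →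
      (∀ m : ℕ, m ≤ 2 → ∀ y : Fin d → ℝ, ‖iteratedFDeriv ℝ m φ y‖ ≤ M) →
      ∀ T : ℝ, (∀ x : Fin d → ℝ, u (T, x) = φ x) →
      ∀ A : Matrix (Fin d) (Fin d) ℝ, A.IsSymm → (∀ i j, |A i j| ≤ M) →
      ∀ β : Fin d → ℝ, (∀ i, |β i| ≤ M) →
      ∀ μ : ℝ, 0 < μ → μ ≤ M →
      ∀ γ c g ψ κ : ℝ, |γ| ≤ M → |c| ≤ M → |g| ≤ M → |ψ| ≤ M → |κ| ≤ M →
      ∀ z n : Fin d → ℝ, (∑ i, (n i) ^ 2 = 1) →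
      -- the parabolic PDE holds at (T, z)
      (deriv (fun τ => u (τ, z)) T + stickyGen A β φ z + c * φ z + g = 0) →
      -- the sticky (second-order) boundary relation holds at (T, z)
      (-μ * stickyGen A β φ z + fderiv ℝ φ z n + γ * φ z = ψ) →
      ∀ h r t' : ℝ, 0 < h → h < 1 → 0 < r → r ≤ Real.sqrt h →
      t' ≤ T → T ≤ t' + 2 * μ * r →
      ∀ Yk Z' : ℝ, 0 < Yk →
      |u (T, z + r • n) *
            ((1 + h * κ) * Yk + 2 * r * γ * Yk
              + 2 * ((T - t') / (2 * μ)) * μ * c * Yk)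
          + (Z' - 2 * μ * (r - (T - t') / (2 * μ)) * stickyGen A β φ z * Yk
              + 2 * ((T - t') / (2 * μ)) * μ * g * Yk - 2 * r * ψ * Yk)
          - u (t', z - r • n) * ((1 + h * κ) * Yk) - Z'|
        ≤ C * h * Yk :=
  sticky_euler_caseIIIb_one_step_general d M hM
end

section
/- Let (Ω, ℱ, P) be a probability space with a filtration (ℱ_k)_{k∈ℕ}, let N ∈ ℕ, and let τ be a stopping time with τ ≤ N almost surely. Let (V_k)_{k=0}^{N}, (f_k)_{k=0}^{N}, (q_k)_{k=0}^{N} be adapted real-valued processes, each bounded by a constant, with V_k ≥ 0, f_k ≥ 0 and q_k ≥ 1 almost surely for every k. Suppose that for every k < N, almost surely on the event {k < τ}: q_k · E[V_{k+1} | ℱ_k] − V_k ≤ −f_k. Then E[ ∑_{k=0}^{τ−1} f_k ∏_{j=0}^{k−1} q_j ] ≤ E[V_0], where the empty product equals 1. -/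
/-!
Put `Q_k = ∏_{j<k} q_j` and `M_n = V_{n∧τ} Q_{n∧τ} + ∑_{k<n∧τ} f_k Q_k`. The increment
`M_{n+1} - M_n = 1_{n<τ} Q_n (q_n V_{n+1} - V_n + f_n)` has nonpositive conditional expectation
given `ℱ_n`, because `1_{n<τ} Q_n` is `ℱ_n`-measurable and nonnegative and can be pulled out.
Hence `E[M_N] ≤ E[M_0] = E[V_0]`, and `M_N = M_τ ≥ ∑_{k<τ} f_k Q_k` since `V_τ Q_τ ≥ 0`.
-/

open MeasureTheory Finset

namespace MeasureTheory

theorem Adapted.memLp_top {Ω ι : Type*} [Preorder ι] {m : MeasurableSpace Ω} {P : Measure Ω}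
    {ℱ : Filtration ι m} {X : ι → Ω → ℝ} (hX : Adapted ℱ X) {C : ℝ}
    (hXb : ∀ k ω, |X k ω| ≤ C) (k : ι) : MemLp (X k) ⊤ P :=
  memLp_top_of_bound hX.measurable.aestronglyMeasurable C (ae_of_all _ fun ω => hXb k ω)

theorem condExp_mul_add_of_stronglyMeasurable {Ω : Type*} {m m₀ : MeasurableSpace Ω}
    {μ : Measure Ω} (hm : m ≤ m₀) [SigmaFinite (μ.trim hm)] {g h X : Ω → ℝ}
    (hg : StronglyMeasurable[m] g) (hh : StronglyMeasurable[m] h) (hgX : Integrable (g * X) μ)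
    (hX : Integrable X μ) (hh_int : Integrable h μ) :
    μ[g * X + h | m] =ᵐ[μ] g * μ[X | m] + h := by
  filter_upwards [condExp_add hgX hh_int m, condExp_mul_of_stronglyMeasurable_left hg hgX hX]
    with ω hadd hmul
  rw [hadd, Pi.add_apply, hmul, condExp_of_stronglyMeasurable hm hh hh_int, Pi.add_apply]

end MeasureTheory

namespace StoppedComparison

def weightedIncrement (v f q : ℕ → ℝ) (i : ℕ) : ℝ :=
  (∏ j ∈ range i, q j) * (q i * v (i + 1) - v i + f i)

section Deterministic

variable (v f q : ℕ → ℝ)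

theorem sum_range_weightedIncrement (n : ℕ) :
    ∑ i ∈ range n, weightedIncrement v f q i
      = v n * ∏ j ∈ range n, q j - v 0 + ∑ k ∈ range n, f k * ∏ j ∈ range k, q j := by
  have hsplit : ∀ i, weightedIncrement v f q i
      = (v (i + 1) * ∏ j ∈ range (i + 1), q j - v i * ∏ j ∈ range i, q j)
        + f i * ∏ j ∈ range i, q j := by
    intro i
    rw [weightedIncrement, prod_range_succ]
    ring
  simp only [hsplit, sum_add_distrib, sum_range_sub (fun i => v i * ∏ j ∈ range i, q j),
    range_zero, prod_empty, mul_one]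

variable {v q}

theorem sum_range_weighted_le (hv : ∀ k, 0 ≤ v k) (hq : ∀ k, 0 ≤ q k) {t N : ℕ} (htN : t ≤ N) :
    ∑ k ∈ range t, f k * ∏ j ∈ range k, q j
      ≤ v 0 + ∑ i ∈ range N, if i < t then weightedIncrement v f q i else 0 := by
  rw [← sum_range_add_sum_Ico _ htN, sum_ite_of_true (fun i hi => mem_range.1 hi),
    sum_ite_of_false (fun i hi => not_lt.2 (mem_Ico.1 hi).1), sum_const_zero, add_zero,
    sum_range_weightedIncrement]
  have : 0 ≤ v t * ∏ j ∈ range t, q j := mul_nonneg (hv t) (prod_nonneg fun j _ => hq j)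
  linarith

end Deterministic

section Stochastic

variable {Ω : Type*} {m : MeasurableSpace Ω} {P : Measure Ω} {ℱ : Filtration ℕ m} {τ : Ω → ℕ}
  {V f q : ℕ → Ω → ℝ}

theorem measurableSet_lt_of_isStoppingTime
    (hτ : IsStoppingTime ℱ (fun ω => (τ ω : WithTop ℕ))) (n : ℕ) :
    MeasurableSet[ℱ n] {ω | n < τ ω} := by
  convert (hτ n).compl using 1
  ext ω
  simp

theorem stronglyMeasurable_prod_range (hq : Adapted ℱ q) (n : ℕ) :
    StronglyMeasurable[ℱ n] fun ω => ∏ j ∈ range n, q j ω :=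
  stronglyMeasurable_fun_prod _ fun _ hj =>
    (hq.measurable_le (mem_range.1 hj).le).stronglyMeasurable

theorem memLp_top_prod_range (hq : ∀ k, MemLp (q k) ⊤ P) (n : ℕ) :
    MemLp (fun ω => ∏ j ∈ range n, q j ω) ⊤ P := by
  induction n with
  | zero => simpa using memLp_top_const (μ := P) (1 : ℝ)
  | succ n ih =>
    simp only [prod_range_succ]
    exact (hq n).mul ih

noncomputable def stoppedIncrement (τ : Ω → ℕ) (V f q : ℕ → Ω → ℝ) (n : ℕ) : Ω → ℝ :=
  {ω | n < τ ω}.indicator fun ω => weightedIncrement (V · ω) (f · ω) (q · ω) n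

theorem stoppedIncrement_apply (n : ℕ) (ω : Ω) :
    stoppedIncrement τ V f q n ω
      = if n < τ ω then weightedIncrement (V · ω) (f · ω) (q · ω) n else 0 :=
  Set.indicator_apply _ _ _

theorem stoppedIncrement_eq_mul_add (n : ℕ) :
    stoppedIncrement τ V f q n
      = {ω | n < τ ω}.indicator (fun ω => (∏ j ∈ range n, q j ω) * q n ω) * V (n + 1)
        + {ω | n < τ ω}.indicator fun ω => (∏ j ∈ range n, q j ω) * (f n ω - V n ω) := by
  ext ω
  by_cases hω : n < τ ω
  · simp only [stoppedIncrement_apply, weightedIncrement, hω, if_true, Pi.add_apply, Pi.mul_apply,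
      Set.indicator_of_mem (show ω ∈ {ω | n < τ ω} from hω)]
    ring
  · simp [stoppedIncrement_apply, hω]

variable [IsFiniteMeasure P]

theorem integrable_stoppedIncrement (hτ : IsStoppingTime ℱ (fun ω => (τ ω : WithTop ℕ)))
    (hVL : ∀ k, MemLp (V k) ⊤ P) (hfL : ∀ k, MemLp (f k) ⊤ P) (hqL : ∀ k, MemLp (q k) ⊤ P)
    (n : ℕ) : Integrable (stoppedIncrement τ V f q n) P :=
  (((((hVL (n + 1)).mul (hqL n)).sub (hVL n)).add (hfL n)).mul
    (memLp_top_prod_range hqL n)).indicator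
    (ℱ.le n _ (measurableSet_lt_of_isStoppingTime hτ n)) |>.integrable le_top

theorem condExp_stoppedIncrement_ae_eq (hτ : IsStoppingTime ℱ (fun ω => (τ ω : WithTop ℕ)))
    (hV : Adapted ℱ V) (hf : Adapted ℱ f) (hq : Adapted ℱ q)
    (hVL : ∀ k, MemLp (V k) ⊤ P) (hfL : ∀ k, MemLp (f k) ⊤ P) (hqL : ∀ k, MemLp (q k) ⊤ P)
    (n : ℕ) :
    P[stoppedIncrement τ V f q n | ℱ n] =ᵐ[P] {ω | n < τ ω}.indicator fun ω =>
      (∏ j ∈ range n, q j ω) * (q n ω * P[V (n + 1) | ℱ n] ω - V n ω + f n ω) := by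
  have hs := measurableSet_lt_of_isStoppingTime hτ n
  have hQ := stronglyMeasurable_prod_range hq n
  have hQL := memLp_top_prod_range hqL n
  have hgL := ((hqL n).mul (r := ⊤) hQL).indicator (ℱ.le n _ hs)
  have hhL := (((hfL n).sub (hVL n)).mul (r := ⊤) hQL).indicator (ℱ.le n _ hs)
  rw [stoppedIncrement_eq_mul_add]
  refine (condExp_mul_add_of_stronglyMeasurable (ℱ.le n)
    ((hQ.mul (hq n).stronglyMeasurable).indicator hs)
    ((hQ.mul ((hf n).stronglyMeasurable.sub (hV n).stronglyMeasurable)).indicator hs)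
    (((hVL (n + 1)).mul hgL).integrable le_top)
    ((hVL (n + 1)).integrable le_top) (hhL.integrable le_top)).trans (ae_of_all _ fun ω => ?_)
  by_cases hω : n < τ ω
  · simp only [Pi.add_apply, Pi.mul_apply, Pi.sub_apply,
      Set.indicator_of_mem (show ω ∈ {ω | n < τ ω} from hω)]
    ring
  · simp [hω]

theorem integral_stoppedIncrement_nonpos (hτ : IsStoppingTime ℱ (fun ω => (τ ω : WithTop ℕ)))
    (hV : Adapted ℱ V) (hf : Adapted ℱ f) (hq : Adapted ℱ q)
    (hVL : ∀ k, MemLp (V k) ⊤ P) (hfL : ∀ k, MemLp (f k) ⊤ P) (hqL : ∀ k, MemLp (q k) ⊤ P)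
    (hq0 : ∀ k ω, 0 ≤ q k ω) {n : ℕ}
    (hstep : ∀ᵐ ω ∂P, n < τ ω → q n ω * P[V (n + 1) | ℱ n] ω - V n ω ≤ -f n ω) :
    ∫ ω, stoppedIncrement τ V f q n ω ∂P ≤ 0 := by
  rw [← integral_condExp (ℱ.le n)]
  refine integral_nonpos_of_ae ?_
  filter_upwards [condExp_stoppedIncrement_ae_eq hτ hV hf hq hVL hfL hqL n, hstep]
    with ω hD hω
  rw [hD]
  by_cases hn : n < τ ω
  · rw [Set.indicator_of_mem (show ω ∈ {ω | n < τ ω} from hn)]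
    exact mul_nonpos_of_nonneg_of_nonpos (prod_nonneg fun j _ => hq0 j ω) (by linarith [hω hn])
  · simp [hn]

end Stochastic

end StoppedComparison

open StoppedComparison

/-- Stopped comparison (discrete maximum) principle behind Lemma 5.6 and
Corollary 5.7: if `q_k E[V_{k+1} | ℱ_k] − V_k ≤ −f_k` on `{k < τ}`, then the
expected weighted additive functional up to the stopping time `τ` is bounded by
the initial barrier value `E[V_0]`. -/
theorem stopped_comparison_principle {Ω : Type*} {m : MeasurableSpace Ω}
    (P : Measure Ω) [IsProbabilityMeasure P] (ℱ : Filtration ℕ m) (N : ℕ)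
    (τ : Ω → ℕ) (hτ : IsStoppingTime ℱ (fun ω => (τ ω : WithTop ℕ))) (hτN : ∀ ω, τ ω ≤ N)
    (V f q : ℕ → Ω → ℝ)
    (hV : Adapted ℱ V) (hf : Adapted ℱ f) (hq : Adapted ℱ q)
    (Cb : ℝ) (hVb : ∀ k ω, |V k ω| ≤ Cb) (hfb : ∀ k ω, |f k ω| ≤ Cb)
    (hqb : ∀ k ω, |q k ω| ≤ Cb)
    (hVpos : ∀ k ω, 0 ≤ V k ω) (hfpos : ∀ k ω, 0 ≤ f k ω)
    (hq1 : ∀ k ω, 1 ≤ q k ω)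
    (hstep : ∀ k < N, ∀ᵐ ω ∂P, k < τ ω →
      q k ω * (P[V (k + 1)|ℱ k]) ω - V k ω ≤ -f k ω) :
    ∫ ω, (∑ k ∈ Finset.range (τ ω), f k ω * ∏ j ∈ Finset.range k, q j ω) ∂P
      ≤ ∫ ω, V 0 ω ∂P := by
  have hq0 : ∀ k ω, 0 ≤ q k ω := fun k ω => zero_le_one.trans (hq1 k ω)
  have hVL := hV.memLp_top (P := P) hVb
  have hfL := hf.memLp_top (P := P) hfb
  have hqL := hq.memLp_top (P := P) hqb
  have hD := integrable_stoppedIncrement hτ hVL hfL hqL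
  have hsumD : Integrable (fun ω => ∑ i ∈ range N, stoppedIncrement τ V f q i ω) P :=
    integrable_finsetSum _ fun i _ => hD i
  calc ∫ ω, ∑ k ∈ range (τ ω), f k ω * ∏ j ∈ range k, q j ω ∂P
      ≤ ∫ ω, V 0 ω + ∑ i ∈ range N, stoppedIncrement τ V f q i ω ∂P := by
        refine integral_mono_of_nonneg (ae_of_all _ fun ω => ?_)
          (((hVL 0).integrable le_top).add hsumD) (ae_of_all _ fun ω => ?_)
        · exact sum_nonneg fun k _ => mul_nonneg (hfpos k ω) (prod_nonneg fun j _ => hq0 j ω)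
        · simpa only [stoppedIncrement_apply] using
            sum_range_weighted_le (f · ω) (fun k => hVpos k ω) (fun k => hq0 k ω) (hτN ω)
    _ = ∫ ω, V 0 ω ∂P + ∑ i ∈ range N, ∫ ω, stoppedIncrement τ V f q i ω ∂P := by
        rw [integral_add ((hVL 0).integrable le_top) hsumD,
          integral_finsetSum _ fun i _ => hD i]
    _ ≤ ∫ ω, V 0 ω ∂P :=
        add_le_of_nonpos_right <| sum_nonpos fun i hi =>
          integral_stoppedIncrement_nonpos hτ hV hf hq hVL hfL hqL hq0 (hstep i (mem_range.1 hi))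
end
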